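/- Let E_A(ε,w) = ε(w+ε)(w+2ε)/(w+3ε) − (w+2ε)²((w+2ε)⁴ + ε⁴)/(4((w+2ε)⁴ − ε⁴)) and E_B(ε,w) = ε(w+ε)²/(w+3ε) − (w+ε)²/(2(1 − ε⁴/(w+2ε)⁴)), and define the Peierls–Nabarro barrier ΔE_{AB}(ε, w_A) = E_A(ε, w_A) − E_B(ε, w_A/2). Then: (i) for every k > 0, ΔE_{AB}(k w_A, w_A) = −γ(k) w_A² where γ(k) > 0 does not depend on w_A; (ii) γ(k) → 1/8 as k → 0+ and inf_{k > 0} γ(k) > 0; consequently (iii) ΔE_{AB}(ε, w_A) < 0 for all ε, w_A > 0, there exists c > 0 with ΔE_{AB}(ε, w_A) ≤ −c w_A² for all ε, w_A > 0, and ΔE_{AB}(ε, w_A)/w_A² → −1/8 as ε/w_A → 0+. -/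

import Mathlib

/-!
Both energies are homogeneous of degree two in `(ε, w)`, so `ΔE ε w = w² ΔE (ε / w) 1` and
everything reduces to the one-variable function `k ↦ -ΔE k 1`. Using
`(1 + 2k)⁴ - k⁴ = (1 + k)(1 + 3k)(1 + 4k + 5k²)` and
`(1 + 4k)⁴ - (2k)⁴ = (1 + 2k)(1 + 6k)(1 + 8k + 20k²)`, this function is a rational function `γ`
whose numerator and denominator have positive coefficients; `γ 0 = 1/8`, and
`10 · numerator - denominator` again has positive coefficients, so `γ ≥ 1/10` for `k ≥ 0`.
-/

open scoped BigOperators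

noncomputable section

/-- Closed-form onsite energy `E_A(ε,w)`. -/
def EA (ε w : ℝ) : ℝ :=
  ε * (w + ε) * (w + 2 * ε) / (w + 3 * ε)
    - (w + 2 * ε) ^ 2 * ((w + 2 * ε) ^ 4 + ε ^ 4) / (4 * ((w + 2 * ε) ^ 4 - ε ^ 4))

/-- Closed-form offsite energy `E_B(ε,w)`. -/
def EB (ε w : ℝ) : ℝ :=
  ε * (w + ε) ^ 2 / (w + 3 * ε)
    - (w + ε) ^ 2 / (2 * (1 - ε ^ 4 / (w + 2 * ε) ^ 4))

/-- The Peierls–Nabarro barrier `ΔE_{AB}(ε, w_A) = E_A(ε, w_A) − E_B(ε, w_A/2)`. -/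
def ΔE (ε wA : ℝ) : ℝ := EA ε wA - EB ε (wA / 2)

open Filter Topology

theorem EA_mul_mul (c ε w : ℝ) : EA (c * ε) (c * w) = c ^ 2 * EA ε w := by
  rcases eq_or_ne c 0 with rfl | hc
  · simp [EA]
  unfold EA
  rw [← mul_div_mul_left _ (w + 3 * ε) hc,
    ← mul_div_mul_left _ (4 * ((w + 2 * ε) ^ 4 - ε ^ 4)) (pow_ne_zero 4 hc)]
  ring

theorem EB_mul_mul (c ε w : ℝ) : EB (c * ε) (c * w) = c ^ 2 * EB ε w := by
  rcases eq_or_ne c 0 with rfl | hc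
  · simp [EB]
  unfold EB
  rw [← mul_div_mul_left _ (w + 3 * ε) hc,
    ← mul_div_mul_left (ε ^ 4) ((w + 2 * ε) ^ 4) (pow_ne_zero 4 hc)]
  ring

theorem ΔE_mul_mul (c ε w : ℝ) : ΔE (c * ε) (c * w) = c ^ 2 * ΔE ε w := by
  rw [ΔE, ΔE, mul_div_assoc, EA_mul_mul, EB_mul_mul, mul_sub]

def pnGamma (k : ℝ) : ℝ :=
  (1 + 22 * k + 200 * k ^ 2 + 992 * k ^ 3 + 2947 * k ^ 4 + 5610 * k ^ 5 + 7632 * k ^ 6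
      + 8800 * k ^ 7 + 8224 * k ^ 8 + 3840 * k ^ 9)
    / (8 * (1 + k) * (1 + 3 * k) * (1 + 6 * k) * (1 + 4 * k + 5 * k ^ 2)
      * (1 + 8 * k + 20 * k ^ 2))

theorem ΔE_eq_neg_pnGamma {k : ℝ} (hk : 0 ≤ k) : ΔE k 1 = -pnGamma k := by
  have hA : (1 + 2 * k) ^ 4 - k ^ 4 = (1 + k) * (1 + 3 * k) * (1 + 4 * k + 5 * k ^ 2) := by
    ring
  have hB : 1 - k ^ 4 / (1 / 2 + 2 * k) ^ 4
      = (1 + 2 * k) * (1 + 6 * k) * (1 + 8 * k + 20 * k ^ 2) / (1 + 4 * k) ^ 4 := by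
    field_simp
    ring
  unfold ΔE EA EB pnGamma
  rw [hA, hB]
  field_simp
  ring

theorem ΔE_eq_neg_pnGamma_mul {ε w : ℝ} (hε : 0 ≤ ε) (hw : 0 < w) :
    ΔE ε w = -pnGamma (ε / w) * w ^ 2 := by
  have h := ΔE_mul_mul w (ε / w) 1
  rw [mul_div_cancel₀ ε hw.ne', mul_one, ΔE_eq_neg_pnGamma (div_nonneg hε hw.le)] at h
  rw [h, mul_comm]

theorem pnGamma_pos {k : ℝ} (hk : 0 ≤ k) : 0 < pnGamma k := by
  unfold pnGamma
  positivity

theorem one_tenth_le_pnGamma {k : ℝ} (hk : 0 ≤ k) : 1 / 10 ≤ pnGamma k := by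
  have h : 0 ≤ 2 + 44 * k + 368 * k ^ 2 + 1664 * k ^ 3 + 5030 * k ^ 4 + 13972 * k ^ 5
      + 37440 * k ^ 6 + 73600 * k ^ 7 + 82240 * k ^ 8 + 38400 * k ^ 9 := by
    positivity
  rw [pnGamma, le_div_iff₀ (by positivity)]
  linear_combination h / 10

theorem tendsto_pnGamma_nhdsGT_zero : Tendsto pnGamma (𝓝[>] 0) (𝓝 (1 / 8)) := by
  have h : ContinuousAt pnGamma 0 := by
    unfold pnGamma
    fun_prop (disch := norm_num)
  simpa [pnGamma] using h.continuousWithinAt.tendsto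

/-- Properties of the Peierls–Nabarro barrier for the DNLS: it equals `−γ(k) w_A²` along
rays `ε = k w_A` with `γ > 0`, `γ(k) → 1/8` as `k → 0+`, `inf_{k>0} γ(k) > 0`; consequently
`ΔE_{AB} < 0` everywhere, `ΔE_{AB} ≤ −c w_A²`, and `ΔE_{AB}/w_A² → −1/8` as `ε/w_A → 0+`. -/
theorem pnb_dnls :
    ∃ γ : ℝ → ℝ,
      (∀ k : ℝ, 0 < k → 0 < γ k) ∧
      (∀ k : ℝ, 0 < k → ∀ wA : ℝ, 0 < wA → ΔE (k * wA) wA = -(γ k) * wA ^ 2) ∧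
      Filter.Tendsto γ (nhdsWithin 0 (Set.Ioi 0)) (nhds (1 / 8)) ∧
      (∃ c : ℝ, 0 < c ∧ ∀ k : ℝ, 0 < k → c ≤ γ k) ∧
      (∀ ε wA : ℝ, 0 < ε → 0 < wA → ΔE ε wA < 0) ∧
      (∃ c : ℝ, 0 < c ∧ ∀ ε wA : ℝ, 0 < ε → 0 < wA → ΔE ε wA ≤ -c * wA ^ 2) ∧
      (∀ η : ℝ, 0 < η → ∃ ρ₀ : ℝ, 0 < ρ₀ ∧
        ∀ ε wA : ℝ, 0 < ε → 0 < wA → ε / wA < ρ₀ →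
          |ΔE ε wA / wA ^ 2 + 1 / 8| ≤ η) := by
  refine ⟨pnGamma, fun k hk ↦ pnGamma_pos hk.le, fun k hk wA hw ↦ ?_,
    tendsto_pnGamma_nhdsGT_zero, ⟨1 / 10, by norm_num, fun k hk ↦ one_tenth_le_pnGamma hk.le⟩,
    fun ε wA hε hw ↦ ?_, ⟨1 / 10, by norm_num, fun ε wA hε hw ↦ ?_⟩, fun η hη ↦ ?_⟩
  · rw [ΔE_eq_neg_pnGamma_mul (by positivity) hw, mul_div_cancel_right₀ k hw.ne']
  · rw [ΔE_eq_neg_pnGamma_mul hε.le hw]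
    exact mul_neg_of_neg_of_pos (neg_neg_of_pos (pnGamma_pos (by positivity))) (by positivity)
  · rw [ΔE_eq_neg_pnGamma_mul hε.le hw]
    exact mul_le_mul_of_nonneg_right
      (neg_le_neg (one_tenth_le_pnGamma (by positivity))) (sq_nonneg wA)
  · obtain ⟨δ, hδ, hclose⟩ := Metric.tendsto_nhdsWithin_nhds.mp tendsto_pnGamma_nhdsGT_zero η hη
    refine ⟨δ, hδ, fun ε wA hε hw hsmall ↦ ?_⟩
    have hk : 0 < ε / wA := div_pos hε hw
    have hdist := hclose hk (by rwa [Real.dist_0_eq_abs, abs_of_pos hk])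
    rw [ΔE_eq_neg_pnGamma_mul hε.le hw, mul_div_cancel_right₀ _ (by positivity),
      neg_add_eq_sub, abs_sub_comm]
    exact hdist.le
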